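/- arXiv:2404.17708 — 2 statements merged into one kernel-verified Lean document; each statement's English description precedes it below -/
import Mathlib

section
/- Let (g,[·,·]) be a finite-dimensional Lie algebra, r ∈ ∧²g a solution of the classical Yang–Baxter equation, and n: g → g a linear map such that (i) n ∘ 𝚛 = 𝚛 ∘ ᵗn, and (ii) the concomitant C(r,n)(η₁,η₂) = [ᵗn, ad*_{𝚛η₁}]η₂ − [ᵗn, ad*_{𝚛η₂}]η₁ vanishes for all η₁,η₂ ∈ g*. Then nr (defined by (nr)^♯ = n∘𝚛) is a solution of the classical Yang–Baxter equation if and only if the Nijenhuis torsion of n vanishes on the image of 𝚛: T(n)(𝚛η₁, 𝚛η₂) = 0 for all η₁,η₂ ∈ g*. -/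
/-!
Condition (i) lets one move `n` across `𝚛`, and then the bracket of `n𝚛` on `g*` splits as
`[η₁, η₂]_{nr} = [ᵗn η₁, η₂]_r + [η₁, ᵗn η₂]_r - ᵗn [η₁, η₂]_r + C(r,n)(η₁, η₂)`.
Once the concomitant vanishes, applying `n𝚛` and the Yang–Baxter equation for `r` gives
`n𝚛[η₁, η₂]_{nr} + [n𝚛η₁, n𝚛η₂] = -T(n)(𝚛η₁, 𝚛η₂)`, so the two conditions coincide.
-/

section

variable {R L : Type*} [CommRing R] [LieRing L] [LieAlgebra R L]

/-- The bracket `[η₁, η₂]_r` of the paper, for `ρ = r^♯`. -/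
def dualBracket (ρ : Module.Dual R L →ₗ[R] L) (η₁ η₂ : Module.Dual R L) : Module.Dual R L :=
  η₁.comp (LieAlgebra.ad R L (ρ η₂)) - η₂.comp (LieAlgebra.ad R L (ρ η₁))

@[simp]
theorem dualBracket_apply (ρ : Module.Dual R L →ₗ[R] L) (η₁ η₂ : Module.Dual R L) (ξ : L) :
    dualBracket ρ η₁ η₂ ξ = η₂ ⁅ξ, ρ η₁⁆ - η₁ ⁅ξ, ρ η₂⁆ := by
  simp only [dualBracket, LinearMap.sub_apply, LinearMap.comp_apply, LieAlgebra.ad_apply]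
  rw [← lie_skew ξ, ← lie_skew ξ, map_neg, map_neg]
  abel

/-- `ρ` solves the classical Yang–Baxter equation, written in terms of `ρ = r^♯`. -/
def IsCYBESolution (ρ : Module.Dual R L →ₗ[R] L) : Prop :=
  ∀ η₁ η₂, ρ (dualBracket ρ η₁ η₂) = -⁅ρ η₁, ρ η₂⁆

def coadjoint (x : L) : Module.End R (Module.Dual R L) :=
  -(LieAlgebra.ad R L x).dualMap

@[simp]
theorem coadjoint_apply (x : L) (η : Module.Dual R L) (ζ : L) :
    coadjoint x η ζ = -η ⁅x, ζ⁆ := by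
  simp [coadjoint]

def concomitant (ρ : Module.Dual R L →ₗ[R] L) (n : Module.End R L) (η₁ η₂ : Module.Dual R L) :
    Module.Dual R L :=
  ⁅n.dualMap, coadjoint (ρ η₁)⁆ η₂ - ⁅n.dualMap, coadjoint (ρ η₂)⁆ η₁

theorem concomitant_eq (ρ : Module.Dual R L →ₗ[R] L) (n : Module.End R L)
    (η₁ η₂ : Module.Dual R L) :
    concomitant ρ n η₁ η₂ =
      n.dualMap (coadjoint (ρ η₁) η₂) - coadjoint (ρ η₁) (n.dualMap η₂)
        - (n.dualMap (coadjoint (ρ η₂) η₁) - coadjoint (ρ η₂) (n.dualMap η₁)) := by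
  simp only [concomitant, Ring.lie_def, LinearMap.sub_apply, Module.End.mul_apply]

def nijenhuisTorsion (n : Module.End R L) (x y : L) : L :=
  n (⁅n x, y⁆ + ⁅x, n y⁆ - n ⁅x, y⁆) - ⁅n x, n y⁆

variable {ρ : Module.Dual R L →ₗ[R] L} {n : Module.End R L}

theorem dualBracket_comp (hcomm : ∀ η, n (ρ η) = ρ (n.dualMap η)) (η₁ η₂ : Module.Dual R L) :
    dualBracket (n ∘ₗ ρ) η₁ η₂ =
      dualBracket ρ (n.dualMap η₁) η₂ + dualBracket ρ η₁ (n.dualMap η₂)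
        - n.dualMap (dualBracket ρ η₁ η₂) + concomitant ρ n η₁ η₂ := by
  ext ξ
  simp only [concomitant_eq, LinearMap.add_apply, LinearMap.sub_apply, LinearMap.dualMap_apply,
    LinearMap.comp_apply, dualBracket_apply, coadjoint_apply, ← hcomm]
  rw [← lie_skew (n ξ) (ρ η₁), ← lie_skew (n ξ) (ρ η₂), ← lie_skew ξ (ρ η₁), ← lie_skew ξ (ρ η₂)]
  simp only [map_neg]
  ring

theorem comp_dualBracket_comp (hρ : IsCYBESolution ρ) (hcomm : ∀ η, n (ρ η) = ρ (n.dualMap η))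
    (hC : ∀ η₁ η₂, concomitant ρ n η₁ η₂ = 0) (η₁ η₂ : Module.Dual R L) :
    n (ρ (dualBracket (n ∘ₗ ρ) η₁ η₂)) + ⁅n (ρ η₁), n (ρ η₂)⁆ =
      -nijenhuisTorsion n (ρ η₁) (ρ η₂) := by
  rw [dualBracket_comp hcomm, hC, add_zero, map_sub, map_add, hρ, hρ, ← hcomm, ← hcomm, ← hcomm,
    hρ, nijenhuisTorsion]
  simp only [map_sub, map_add, map_neg]
  abel

theorem isCYBESolution_comp_iff (hρ : IsCYBESolution ρ) (hcomm : ∀ η, n (ρ η) = ρ (n.dualMap η))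
    (hC : ∀ η₁ η₂, concomitant ρ n η₁ η₂ = 0) :
    IsCYBESolution (n ∘ₗ ρ) ↔ ∀ η₁ η₂, nijenhuisTorsion n (ρ η₁) (ρ η₂) = 0 := by
  refine forall₂_congr fun η₁ η₂ => ?_
  rw [← neg_eq_zero, ← comp_dualBracket_comp hρ hcomm hC, ← eq_neg_iff_add_eq_zero]
  rfl

end

theorem nr_cybe_iff_torsion_vanishes_on_image_general
    {g : Type*} [LieRing g] [LieAlgebra ℝ g]
    (rmap : Module.Dual ℝ g →ₗ[ℝ] g)
    (brR : Module.Dual ℝ g → Module.Dual ℝ g → Module.Dual ℝ g)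
    (hbr : ∀ η₁ η₂ ξ, brR η₁ η₂ ξ = η₂ ⁅ξ, rmap η₁⁆ - η₁ ⁅ξ, rmap η₂⁆)
    -- r is a CYBE solution
    (hcybe : ∀ η₁ η₂, rmap (brR η₁ η₂) = -⁅rmap η₁, rmap η₂⁆)
    (n : g →ₗ[ℝ] g)
    -- coadjoint action
    (coad : g → Module.Dual ℝ g → Module.Dual ℝ g)
    (hcoad : ∀ ξ η ζ, coad ξ η ζ = - η ⁅ξ, ζ⁆)
    -- (i) n ∘ 𝚛 = 𝚛 ∘ ᵗn
    (hi : ∀ η, n (rmap η) = rmap (n.dualMap η))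
    -- (ii) vanishing of the concomitant C(r,n)
    (hii : ∀ η₁ η₂ : Module.Dual ℝ g,
      n.dualMap (coad (rmap η₁) η₂) - coad (rmap η₁) (n.dualMap η₂)
        - (n.dualMap (coad (rmap η₂) η₁) - coad (rmap η₂) (n.dualMap η₁)) = 0)
    (brNR : Module.Dual ℝ g → Module.Dual ℝ g → Module.Dual ℝ g)
    (hbrNR : ∀ η₁ η₂ ξ, brNR η₁ η₂ ξ = η₂ ⁅ξ, n (rmap η₁)⁆ - η₁ ⁅ξ, n (rmap η₂)⁆) :
    -- nr is a CYBE solution iff T(n) vanishes on the image of 𝚛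
    (∀ η₁ η₂, n (rmap (brNR η₁ η₂)) = -⁅n (rmap η₁), n (rmap η₂)⁆)
    ↔ (∀ η₁ η₂ : Module.Dual ℝ g,
        n (⁅n (rmap η₁), rmap η₂⁆ + ⁅rmap η₁, n (rmap η₂)⁆ - n ⁅rmap η₁, rmap η₂⁆)
          - ⁅n (rmap η₁), n (rmap η₂)⁆ = 0) := by
  obtain rfl : brR = dualBracket rmap := by
    ext η₁ η₂ ξ
    rw [hbr, dualBracket_apply]
  obtain rfl : brNR = dualBracket (n ∘ₗ rmap) := by
    ext η₁ η₂ ξ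
    rw [hbrNR, dualBracket_apply, LinearMap.comp_apply, LinearMap.comp_apply]
  obtain rfl : coad = fun x η => coadjoint (R := ℝ) x η := by
    ext x η ζ
    rw [hcoad, coadjoint_apply]
  have hC : ∀ η₁ η₂, concomitant rmap n η₁ η₂ = 0 := fun η₁ η₂ =>
    (concomitant_eq rmap n η₁ η₂).trans (hii η₁ η₂)
  exact isCYBESolution_comp_iff hcybe hi hC

/-- Under conditions (i) `n∘𝚛 = 𝚛∘ᵗn` and (ii) vanishing of the concomitant
`C(r,n)`, the element `nr` is a solution of the classical Yang–Baxter
equation iff the Nijenhuis torsion of `n` vanishes on the image of `𝚛`. -/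
theorem nr_cybe_iff_torsion_vanishes_on_image
    {g : Type*} [LieRing g] [LieAlgebra ℝ g] [FiniteDimensional ℝ g]
    (rmap : Module.Dual ℝ g →ₗ[ℝ] g)
    (hskew : ∀ η₁ η₂ : Module.Dual ℝ g, η₂ (rmap η₁) = - η₁ (rmap η₂))
    (brR : Module.Dual ℝ g → Module.Dual ℝ g → Module.Dual ℝ g)
    (hbr : ∀ η₁ η₂ ξ, brR η₁ η₂ ξ = η₂ ⁅ξ, rmap η₁⁆ - η₁ ⁅ξ, rmap η₂⁆)
    -- r is a CYBE solution
    (hcybe : ∀ η₁ η₂, rmap (brR η₁ η₂) = -⁅rmap η₁, rmap η₂⁆)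
    (n : g →ₗ[ℝ] g)
    -- coadjoint action
    (coad : g → Module.Dual ℝ g → Module.Dual ℝ g)
    (hcoad : ∀ ξ η ζ, coad ξ η ζ = - η ⁅ξ, ζ⁆)
    -- (i) n ∘ 𝚛 = 𝚛 ∘ ᵗn
    (hi : ∀ η, n (rmap η) = rmap (n.dualMap η))
    -- (ii) vanishing of the concomitant C(r,n)
    (hii : ∀ η₁ η₂ : Module.Dual ℝ g,
      n.dualMap (coad (rmap η₁) η₂) - coad (rmap η₁) (n.dualMap η₂)
        - (n.dualMap (coad (rmap η₂) η₁) - coad (rmap η₂) (n.dualMap η₁)) = 0)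
    (brNR : Module.Dual ℝ g → Module.Dual ℝ g → Module.Dual ℝ g)
    (hbrNR : ∀ η₁ η₂ ξ, brNR η₁ η₂ ξ = η₂ ⁅ξ, n (rmap η₁)⁆ - η₁ ⁅ξ, n (rmap η₂)⁆) :
    -- nr is a CYBE solution iff T(n) vanishes on the image of 𝚛
    (∀ η₁ η₂, n (rmap (brNR η₁ η₂)) = -⁅n (rmap η₁), n (rmap η₂)⁆)
    ↔ (∀ η₁ η₂ : Module.Dual ℝ g,
        n (⁅n (rmap η₁), rmap η₂⁆ + ⁅rmap η₁, n (rmap η₂)⁆ - n ⁅rmap η₁, rmap η₂⁆)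
          - ⁅n (rmap η₁), n (rmap η₂)⁆ = 0) :=
  nr_cybe_iff_torsion_vanishes_on_image_general rmap brR hbr hcybe n coad hcoad hi hii brNR hbrNR
end

section
/- Let n be a Nijenhuis operator on a Lie algebra (g,[·,·]) and δ: g → ∧²g a 1-cocycle (for ad^{(2)}). Define for k ≥ 1 the deformed cochain δ_{(ᵗn)^k} = ι_{(ᵗn)^k}∘δ − δ∘n^k. Assume the transpose ᵗn also has vanishing Nijenhuis torsion with respect to the dual Lie bracket [·,·]_{g*} = δ^t. Then the recurrence δ_{(ᵗn)^k}(ξ) = ι_{ᵗn} δ_{(ᵗn)^{k−1}}(ξ) − δ_{(ᵗn)^{k−1}}(nξ) holds for all ξ ∈ g and k ≥ 1 (with δ_{(ᵗn)^0} = δ). -/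
/-!
Write `N = ᵗn` and `[·,·]` for the bracket on `g*` transposed from `δ`. Pairing with `ξ` turns
`δ_{(ᵗn)^k}` into the bracket deformed by `N^k`,
`[x, y]_{N^k} = [N^k x, y] + [x, N^k y] - N^k [x, y]`, so the recurrence is an identity between
the deformed brackets of the powers of one Nijenhuis operator. It follows from
`[N x, N^m y] + [N^m x, N y] = N^m [x, y]_N + N [x, y]_{N^m}`, proved by induction on `m` from
the vanishing torsion of `N` at `(N^m x, y)` and `(x, N^m y)`.
-/

section Nijenhuis

variable {R V : Type*} [Semiring R] [AddCommGroup V] [Module R V]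

def deformedBracket (br : V → V → V) (A : Module.End R V) (x y : V) : V :=
  br (A x) y + br x (A y) - A (br x y)

def IsNijenhuis (br : V → V → V) (N : Module.End R V) : Prop :=
  ∀ x y, N (deformedBracket br N x y) = br (N x) (N y)

variable {br : V → V → V} {N : Module.End R V}

theorem IsNijenhuis.bracket_add_bracket_pow (hN : IsNijenhuis br N) (m : ℕ) (x y : V) :
    br (N x) ((N ^ m) y) + br ((N ^ m) x) (N y)
      = (N ^ m) (deformedBracket br N x y) + N (deformedBracket br (N ^ m) x y) := by
  induction m with
  | zero =>
    simp only [deformedBracket, pow_zero, Module.End.one_apply, map_add, map_sub]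
    abel
  | succ m ih =>
    calc br (N x) ((N ^ (m + 1)) y) + br ((N ^ (m + 1)) x) (N y)
        = N (deformedBracket br N x ((N ^ m) y) + deformedBracket br N ((N ^ m) x) y) := by
          rw [pow_succ', Module.End.mul_apply, Module.End.mul_apply, ← hN, ← hN, map_add,
            add_comm]
      _ = N ((N ^ m) (deformedBracket br N x y) + deformedBracket br (N ^ (m + 1)) x y) := by
          congr 1
          simp only [deformedBracket, pow_succ', Module.End.mul_apply, map_add, map_sub] at ih ⊢
          linear_combination (norm := module) ih
      _ = (N ^ (m + 1)) (deformedBracket br N x y) + N (deformedBracket br (N ^ (m + 1)) x y) := by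
          rw [map_add, pow_succ', Module.End.mul_apply]

theorem IsNijenhuis.deformedBracket_pow_succ (hN : IsNijenhuis br N) (m : ℕ) (x y : V) :
    deformedBracket br (N ^ (m + 1)) x y
      = deformedBracket br (N ^ m) (N x) y + deformedBracket br (N ^ m) x (N y)
        - N (deformedBracket br (N ^ m) x y) := by
  have key := hN.bracket_add_bracket_pow m x y
  have hcomm (z : V) : N ((N ^ m) z) = (N ^ m) (N z) :=
    LinearMap.congr_fun (Commute.self_pow N m).eq z
  simp only [deformedBracket, pow_succ, Module.End.mul_apply, map_add, map_sub, hcomm] at key ⊢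
  linear_combination (norm := module) -key

end Nijenhuis

theorem LinearMap.dualMap_pow_apply {R M : Type*} [CommSemiring R] [AddCommMonoid M] [Module R M]
    (f : Module.End R M) (k : ℕ) (φ : Module.Dual R M) (v : M) :
    ((f.dualMap ^ k) φ) v = φ ((f ^ k) v) := by
  induction k generalizing φ with
  | zero => rfl
  | succ k ih =>
    rw [pow_succ, pow_succ', Module.End.mul_apply, ih, Module.End.mul_apply, dualMap_apply]

theorem deformed_cochain_recurrence_general
    {g : Type*} [LieRing g] [LieAlgebra ℝ g]
    (n : Module.End ℝ g)
    (δ : g →ₗ[ℝ] Module.Dual ℝ g →ₗ[ℝ] Module.Dual ℝ g →ₗ[ℝ] ℝ)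
    -- the transpose of δ is a Lie bracket [·,·]_{g*} on g*
    (brD : Module.Dual ℝ g → Module.Dual ℝ g → Module.Dual ℝ g)
    (hbrD : ∀ η₁ η₂ ξ, brD η₁ η₂ ξ = δ ξ η₁ η₂)
    -- ᵗn is Nijenhuis on (g*,[·,·]_{g*})
    (hNt : ∀ η₁ η₂ : Module.Dual ℝ g,
      n.dualMap (brD (n.dualMap η₁) η₂ + brD η₁ (n.dualMap η₂)
          - n.dualMap (brD η₁ η₂))
        = brD (n.dualMap η₁) (n.dualMap η₂))
    -- the deformed cochains δ_{(ᵗn)^k} = ι_{(ᵗn)^k}∘δ − δ∘n^k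
    (dk : ℕ → g → Module.Dual ℝ g → Module.Dual ℝ g → ℝ)
    (hdk : ∀ k ξ η₁ η₂, dk k ξ η₁ η₂
      = δ ξ ((n.dualMap ^ k) η₁) η₂ + δ ξ η₁ ((n.dualMap ^ k) η₂)
        - δ ((n ^ k) ξ) η₁ η₂) :
    ∀ k : ℕ, 1 ≤ k → ∀ (ξ : g) (η₁ η₂ : Module.Dual ℝ g),
      dk k ξ η₁ η₂
        = dk (k - 1) ξ (n.dualMap η₁) η₂ + dk (k - 1) ξ η₁ (n.dualMap η₂)
          - dk (k - 1) (n ξ) η₁ η₂ := by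
  intro k hk ξ η₁ η₂
  obtain ⟨m, rfl⟩ := Nat.exists_eq_add_of_le' hk
  have hdk_eq (k : ℕ) (ξ : g) (η₁ η₂ : Module.Dual ℝ g) :
      dk k ξ η₁ η₂ = deformedBracket brD (n.dualMap ^ k) η₁ η₂ ξ := by
    simp only [hdk, deformedBracket, LinearMap.add_apply, LinearMap.sub_apply,
      LinearMap.dualMap_pow_apply, hbrD]
  have hNij : IsNijenhuis brD n.dualMap := hNt
  simp only [hdk_eq, Nat.add_sub_cancel, hNij.deformedBracket_pow_succ, LinearMap.add_apply,
    LinearMap.sub_apply, LinearMap.dualMap_apply]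

/-- Recurrence for the hierarchy of deformed 1-cochains:
`δ_{(ᵗn)^k}(ξ) = ι_{ᵗn} δ_{(ᵗn)^{k−1}}(ξ) − δ_{(ᵗn)^{k−1}}(nξ)` for `k ≥ 1`. -/
theorem deformed_cochain_recurrence
    {g : Type*} [LieRing g] [LieAlgebra ℝ g] [FiniteDimensional ℝ g]
    (n : Module.End ℝ g)
    -- n is Nijenhuis on (g,[·,·])
    (hN : ∀ x y : g, n (⁅n x, y⁆ + ⁅x, n y⁆ - n ⁅x, y⁆) = ⁅n x, n y⁆)
    (δ : g →ₗ[ℝ] Module.Dual ℝ g →ₗ[ℝ] Module.Dual ℝ g →ₗ[ℝ] ℝ)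
    (hskew : ∀ ξ η₁ η₂, δ ξ η₁ η₂ = - δ ξ η₂ η₁)
    -- the transpose of δ is a Lie bracket [·,·]_{g*} on g*
    (brD : Module.Dual ℝ g → Module.Dual ℝ g → Module.Dual ℝ g)
    (hbrD : ∀ η₁ η₂ ξ, brD η₁ η₂ ξ = δ ξ η₁ η₂)
    (hJacD : ∀ η₁ η₂ η₃,
      brD (brD η₁ η₂) η₃ + brD (brD η₃ η₁) η₂ + brD (brD η₂ η₃) η₁ = 0)
    -- coadjoint action and the cocycle condition for δ
    (coad : g → Module.Dual ℝ g → Module.Dual ℝ g)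
    (hcoad : ∀ ξ η ζ, coad ξ η ζ = - η ⁅ξ, ζ⁆)
    (hcocycle : ∀ (ξ₁ ξ₂ : g) (η₁ η₂ : Module.Dual ℝ g),
      δ ⁅ξ₁, ξ₂⁆ η₁ η₂
        = δ ξ₂ (coad ξ₁ η₁) η₂ + δ ξ₂ η₁ (coad ξ₁ η₂)
          - δ ξ₁ (coad ξ₂ η₁) η₂ - δ ξ₁ η₁ (coad ξ₂ η₂))
    -- ᵗn is Nijenhuis on (g*,[·,·]_{g*})
    (hNt : ∀ η₁ η₂ : Module.Dual ℝ g,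
      n.dualMap (brD (n.dualMap η₁) η₂ + brD η₁ (n.dualMap η₂)
          - n.dualMap (brD η₁ η₂))
        = brD (n.dualMap η₁) (n.dualMap η₂))
    -- the deformed cochains δ_{(ᵗn)^k} = ι_{(ᵗn)^k}∘δ − δ∘n^k
    (dk : ℕ → g → Module.Dual ℝ g → Module.Dual ℝ g → ℝ)
    (hdk : ∀ k ξ η₁ η₂, dk k ξ η₁ η₂
      = δ ξ ((n.dualMap ^ k) η₁) η₂ + δ ξ η₁ ((n.dualMap ^ k) η₂)
        - δ ((n ^ k) ξ) η₁ η₂) :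
    ∀ k : ℕ, 1 ≤ k → ∀ (ξ : g) (η₁ η₂ : Module.Dual ℝ g),
      dk k ξ η₁ η₂
        = dk (k - 1) ξ (n.dualMap η₁) η₂ + dk (k - 1) ξ η₁ (n.dualMap η₂)
          - dk (k - 1) (n ξ) η₁ η₂ :=
  deformed_cochain_recurrence_general n δ brD hbrD hNt dk hdk
end
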